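/- Let n ≥ 1 be a natural number, 0 ≤ ν ≤ n, λ = n − ν, κ = (n+1)/2, and let k be an even integer. With Γ_m(s) = π^{m(m−1)/4} · ∏_{i=0}^{m−1} Γ(s − i/2), the identity Γ_ν(s) · Γ_λ(s − ν/2 + k/2) · Γ_λ(κ − s − k/2) · Γ_ν(κ − s − λ/2) = (−1)^{n·k/2} · Γ_ν(s − k/2) · Γ_λ(s − ν/2) · Γ_λ(κ − s) · Γ_ν(κ − s − λ/2 + k/2) holds for every s ∈ ℂ. (This encodes the invariance G*_ν(s) = G*_λ(κ − s) of the Gamma factor G*_ν(s) = (−1)^{νk/2} · [Γ_ν(s)/Γ_ν(s − k/2)] · [Γ_λ(s − ν/2 + k/2)/Γ_λ(s − ν/2)] appearing in the functional equation of the constant term of the Siegel Eisenstein series with trivial character.) -/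

import Mathlib

/-!
Euler's reflection formula `Γ(z) Γ(1 - z) = π / sin (π z)` and the antiperiodicity of `sin` give
`Γ(z + j) Γ(1 - z - j) = (-1)^j Γ(z) Γ(1 - z)` for every integer `j`. If `a + b = (m + 1) / 2`,
the `i`-th factor of `Γ_m(a + j)` pairs with the `(m - 1 - i)`-th factor of `Γ_m(b - j)` in exactly
this way, so `Γ_m(a + j) Γ_m(b - j) = (-1)^{m j} Γ_m(a) Γ_m(b)`. The identity is the product of this
relation for `m = ν`, `a = s - k/2` and for `m = n - ν`, `a = s - ν/2`.
-/

open Complex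

/-- The Siegel Gamma factor `Γ_m(s) = π^{m(m-1)/4} · ∏_{i=0}^{m-1} Γ(s - i/2)`. -/
noncomputable def GammaSiegel (m : ℕ) (s : ℂ) : ℂ :=
  (Real.pi : ℂ) ^ (((m * (m - 1) : ℕ) : ℂ) / 4) *
    ∏ i ∈ Finset.range m, Complex.Gamma (s - (i : ℂ) / 2)

open scoped Real

theorem Complex.sin_add_int_mul_pi (z : ℂ) (j : ℤ) : sin (z + j * π) = (-1) ^ j * sin z := by
  simpa [Int.cast_negOnePow, zsmul_eq_mul, -Int.coe_negOnePow] using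
    sin_antiperiodic.add_int_mul_eq (x := z) j

theorem Complex.Gamma_add_intCast_mul_Gamma_one_sub_add_intCast (z : ℂ) (j : ℤ) :
    Gamma (z + j) * Gamma (1 - (z + j)) = (-1) ^ j * (Gamma z * Gamma (1 - z)) := by
  have hinv : ((-1 : ℂ) ^ j)⁻¹ = (-1) ^ j :=
    inv_eq_of_mul_eq_one_left (by rw [← mul_zpow, neg_one_mul, neg_neg, one_zpow])
  rw [Gamma_mul_Gamma_one_sub, Gamma_mul_Gamma_one_sub, mul_add, mul_comm (π : ℂ) j,
    sin_add_int_mul_pi, div_mul_eq_div_div_swap, div_eq_mul_inv _ ((-1) ^ j), hinv, mul_comm]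

theorem prod_Gamma_add_intCast_mul_prod_Gamma_sub_intCast {m : ℕ} {a b : ℂ} (hab : a + b = (m + 1) / 2)
    (j : ℤ) :
    (∏ i ∈ Finset.range m, Gamma (a + j - i / 2)) * ∏ i ∈ Finset.range m, Gamma (b - j - i / 2) =
      (-1) ^ ((m : ℤ) * j) *
        ((∏ i ∈ Finset.range m, Gamma (a - i / 2)) * ∏ i ∈ Finset.range m, Gamma (b - i / 2)) := by
  have hsign : (-1 : ℂ) ^ ((m : ℤ) * j) = ∏ _i ∈ Finset.range m, (-1) ^ j := by
    rw [Finset.prod_const, Finset.card_range, mul_comm, zpow_mul, zpow_natCast]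
  rw [← Finset.prod_range_reflect (fun i : ℕ => Gamma (b - j - i / 2)),
    ← Finset.prod_range_reflect (fun i : ℕ => Gamma (b - i / 2)),
    ← Finset.prod_mul_distrib, ← Finset.prod_mul_distrib, hsign, ← Finset.prod_mul_distrib]
  refine Finset.prod_congr rfl fun i hi => ?_
  have hcast : ((m - 1 - i : ℕ) : ℂ) = m - 1 - i := by
    rw [Finset.mem_range] at hi
    rw [Nat.cast_sub (by omega), Nat.cast_sub (by omega), Nat.cast_one]
  rw [hcast, show a + j - i / 2 = a - i / 2 + j by ring,
    show b - j - (m - 1 - i) / 2 = 1 - (a - i / 2 + j) by linear_combination hab,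
    show b - (m - 1 - i) / 2 = 1 - (a - i / 2) by linear_combination hab]
  exact Gamma_add_intCast_mul_Gamma_one_sub_add_intCast (a - i / 2) j

theorem GammaSiegel_add_intCast_mul_GammaSiegel_sub_intCast {m : ℕ} {a b : ℂ}
    (hab : a + b = (m + 1) / 2) (j : ℤ) :
    GammaSiegel m (a + j) * GammaSiegel m (b - j) =
      (-1) ^ ((m : ℤ) * j) * (GammaSiegel m a * GammaSiegel m b) := by
  simp only [GammaSiegel]
  linear_combination ((π : ℂ) ^ (((m * (m - 1) : ℕ) : ℂ) / 4)) ^ 2 *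
    prod_Gamma_add_intCast_mul_prod_Gamma_sub_intCast hab j

theorem stmt_13 (n ν : ℕ) (hν : ν ≤ n) (k : ℤ) (hk : Even k) (s : ℂ) :
    GammaSiegel ν s * GammaSiegel (n - ν) (s - (ν : ℂ) / 2 + (k : ℂ) / 2) *
        GammaSiegel (n - ν) (((n : ℂ) + 1) / 2 - s - (k : ℂ) / 2) *
        GammaSiegel ν (((n : ℂ) + 1) / 2 - s - ((n : ℂ) - (ν : ℂ)) / 2) =
      (-1 : ℂ) ^ ((n : ℤ) * (k / 2)) * GammaSiegel ν (s - (k : ℂ) / 2) *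
        GammaSiegel (n - ν) (s - (ν : ℂ) / 2) *
        GammaSiegel (n - ν) (((n : ℂ) + 1) / 2 - s) *
        GammaSiegel ν (((n : ℂ) + 1) / 2 - s - ((n : ℂ) - (ν : ℂ)) / 2 + (k : ℂ) / 2) := by
  have hj : (k : ℂ) / 2 = ((k / 2 : ℤ) : ℂ) := (Int.cast_div hk.two_dvd two_ne_zero).symm
  have hsign : (-1 : ℂ) ^ ((n : ℤ) * (k / 2)) =
      (-1) ^ ((ν : ℤ) * (k / 2)) * (-1) ^ (((n - ν : ℕ) : ℤ) * (k / 2)) := by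
    rw [← zpow_add₀ (by norm_num), ← add_mul, Nat.cast_sub hν, add_sub_cancel]
  have hν_pair := GammaSiegel_add_intCast_mul_GammaSiegel_sub_intCast
    (m := ν) (a := s - (k / 2 : ℤ))
    (b := ((n : ℂ) + 1) / 2 - s - ((n : ℂ) - ν) / 2 + (k / 2 : ℤ)) (by ring) (k / 2)
  have hnν_pair := GammaSiegel_add_intCast_mul_GammaSiegel_sub_intCast
    (m := n - ν) (a := s - ν / 2) (b := ((n : ℂ) + 1) / 2 - s) (by push_cast [hν]; ring) (k / 2)
  rw [sub_add_cancel, add_sub_cancel_right] at hν_pair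
  rw [hj, hsign]
  linear_combination congrArg₂ (· * ·) hν_pair hnν_pair
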